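/- Suppose λ ∈ ρ + C, μ ∈ E, and ‖λ − μ‖² = (1/2)·Σ_{α ∈ Δ⁺, (α,μ)=0} (λ,α). Then μ ∈ C and λ = μ + ρ_μ; consequently λ − ρ(λ) = μ − ρ(μ) and also (1/2)·Σ_{α ∈ Δ⁺, (α,μ)=0} (λ,α) = ‖ρ_μ‖², so both inequalities of the theorem are equalities. -/

import Mathlib

open scoped RealInnerProductSpace
open Finset

/-!
For `m : E` let `ρ_m` be half the sum of the positive roots orthogonal to `m`. Pairing `λ - ρ_m`
with these roots gives `‖ρ_m‖² ≤ ⟪λ, ρ_m⟫`: `λ - ρ` is dominant, and for such a root `α` the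
positive roots not orthogonal to `m` pair nonnegatively with `α`, since `s_α` permutes those it
keeps positive (their contributions cancel) and the others pair positively with `α`. As
`⟪m, ρ_m⟫ = 0`, also `‖ρ_m‖² ≤ ‖λ - m‖²`. The hypothesis is equality in the first inequality at
`m = μ`, which forces `λ = μ + ρ_μ`. For a positive root `β`, the half-sums of the positive roots
of a root system with respect to any two generic vectors have the same length, so
`‖ρ_{s_β μ}‖ = ‖ρ_μ‖`, and the second inequality at `m = s_β μ` reads `0 ≤ ⟪μ, β^∨⟫ ⟪λ, β⟫`.
Hence `μ` is dominant; the remaining identities follow because `λ` is strictly dominant.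
-/

noncomputable section

variable {E : Type*} [NormedAddCommGroup E] [InnerProductSpace ℝ E] {R : Finset E}

def rootReflection (b : E) : E ≃ₗᵢ[ℝ] E := (ℝ ∙ b)ᗮ.reflection

theorem rootReflection_apply (b x : E) :
    rootReflection b x = x - (2 * ⟪x, b⟫ / ⟪b, b⟫) • b := by
  rw [rootReflection, Submodule.reflection_orthogonal_apply, Submodule.reflection_singleton_apply,
    real_inner_self_eq_norm_sq, real_inner_comm]
  simp only [RCLike.ofReal_real_eq_id, id, neg_sub]
  module

@[simp]
theorem rootReflection_rootReflection (b x : E) : rootReflection b (rootReflection b x) = x :=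
  Submodule.reflection_reflection _ x

@[simp]
theorem rootReflection_self (b : E) : rootReflection b b = -b :=
  Submodule.reflection_orthogonalComplement_singleton_eq_neg b

theorem inner_rootReflection_left (b x y : E) :
    ⟪rootReflection b x, y⟫ = ⟪x, rootReflection b y⟫ := by
  conv_lhs => rw [← rootReflection_rootReflection b y]
  exact LinearIsometryEquiv.inner_map_map _ _ _

theorem inner_rootReflection_self_right (b x : E) : ⟪rootReflection b x, b⟫ = -⟪x, b⟫ := by
  rw [inner_rootReflection_left, rootReflection_self, inner_neg_right]

theorem inner_rootReflection_of_inner_eq_zero {b m : E} (hb : ⟪b, m⟫ = 0) (x : E) :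
    ⟪rootReflection b x, m⟫ = ⟪x, m⟫ := by
  rw [rootReflection_apply, inner_sub_left, real_inner_smul_left, hb, mul_zero, sub_zero]

theorem norm_sub_rootReflection_sq (b x y : E) :
    ‖x - rootReflection b y‖ ^ 2 = ‖x - y‖ ^ 2 + 2 * (2 * ⟪y, b⟫ / ⟪b, b⟫) * ⟪x, b⟫ := by
  rw [norm_sub_sq_real, norm_sub_sq_real, LinearIsometryEquiv.norm_map, rootReflection_apply,
    inner_sub_right, real_inner_smul_right]
  ring

def posRoots (R : Finset E) (u : E) : Finset E := R.filter fun α => 0 < ⟪α, u⟫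

def halfSum (s : Finset E) : E := (2 : ℝ)⁻¹ • ∑ α ∈ s, α

def IsIndecomposable (P : Finset E) (δ : E) : Prop :=
  ∀ γ₁ ∈ P, ∀ γ₂ ∈ P, γ₁ + γ₂ ≠ δ

theorem inner_halfSum_left (s : Finset E) (x : E) :
    ⟪halfSum s, x⟫ = 2⁻¹ * ∑ α ∈ s, ⟪α, x⟫ := by
  rw [halfSum, real_inner_smul_left, sum_inner]

theorem inner_halfSum_right (s : Finset E) (x : E) :
    ⟪x, halfSum s⟫ = 2⁻¹ * ∑ α ∈ s, ⟪x, α⟫ := by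
  rw [halfSum, real_inner_smul_right, inner_sum]

theorem halfSum_filter_add_halfSum_filter_not (s : Finset E) (p : E → Prop) [DecidablePred p] :
    halfSum (s.filter p) + halfSum (s.filter fun α => ¬p α) = halfSum s := by
  rw [halfSum, halfSum, halfSum, ← smul_add, sum_filter_add_sum_filter_not]

theorem inner_halfSum_filter_inner_eq_zero (s : Finset E) (m : E) :
    ⟪m, halfSum (s.filter fun α => ⟪α, m⟫ = 0)⟫ = 0 := by
  rw [inner_halfSum_right, sum_eq_zero fun α hα => by
    rw [real_inner_comm]; exact (mem_filter.mp hα).2, mul_zero]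

theorem neg_notMem_posRoots {u α : E} (h : α ∈ posRoots R u) :
    -α ∉ posRoots R u := fun hneg => by
  have h₁ := (mem_filter.mp h).2
  have h₂ := (mem_filter.mp hneg).2
  rw [inner_neg_left] at h₂
  linarith

theorem image_posRoots [DecidableEq E] (g : E ≃ₗᵢ[ℝ] E) (R : Finset E) (u : E) :
    (posRoots R u).image g = posRoots (R.image g) (g u) := by
  simp only [posRoots, filter_image, LinearIsometryEquiv.inner_map_map]

theorem inner_neg_of_notMem_posRoots {u α : E} (hu : ∀ α ∈ R, ⟪α, u⟫ ≠ 0) (hα : α ∈ R)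
    (h : α ∉ posRoots R u) : ⟪α, u⟫ < 0 :=
  (hu α hα).lt_of_le (not_lt.mp fun hpos => h (mem_filter.mpr ⟨hα, hpos⟩))

theorem sum_inner_eq_sum_filter_rootReflection_notMem [DecidableEq E] (P Q : Finset E) (b : E)
    (hQ : Q ⊆ P) (hQb : ∀ γ ∈ Q, rootReflection b γ ∈ P → rootReflection b γ ∈ Q) :
    ∑ γ ∈ Q, ⟪γ, b⟫ = ∑ γ ∈ Q with rootReflection b γ ∉ P, ⟪γ, b⟫ := by
  rw [← sum_filter_add_sum_filter_not Q fun γ => rootReflection b γ ∈ P]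
  refine add_eq_right.mpr ?_
  -- `s_b` pairs off the remaining terms, which change sign under it.
  refine sum_involution (fun γ _ => rootReflection b γ) (fun γ _ => ?_) (fun γ _ h hfix => ?_)
    (fun γ hγ => ?_) (fun γ _ => rootReflection_rootReflection b γ)
  · rw [inner_rootReflection_self_right, add_neg_cancel]
  · exact h (by linarith [inner_rootReflection_self_right b γ, congrArg (⟪·, b⟫) hfix])
  · obtain ⟨hγQ, hγP⟩ := mem_filter.mp hγ
    exact mem_filter.mpr ⟨hQb γ hγQ hγP, by simpa using hQ hγQ⟩

theorem isIndecomposable_of_forall_inner_le [DecidableEq E] {u u' δ : E}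
    (hδ : δ ∈ posRoots R u \ posRoots R u')
    (hmin : ∀ γ ∈ posRoots R u \ posRoots R u', ⟪δ, u⟫ ≤ ⟪γ, u⟫) :
    IsIndecomposable (posRoots R u) δ := by
  rintro γ₁ hγ₁ γ₂ hγ₂ rfl
  obtain ⟨hδP, hδP'⟩ := mem_sdiff.mp hδ
  have hu₁ := (mem_filter.mp hγ₁).2
  have hu₂ := (mem_filter.mp hγ₂).2
  have hnot : ¬0 < ⟪γ₁ + γ₂, u'⟫ := fun h => hδP' (mem_filter.mpr ⟨(mem_filter.mp hδP).1, h⟩)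
  rw [inner_add_left] at hnot
  by_cases h₁ : 0 < ⟪γ₁, u'⟫
  · have := hmin γ₂ (mem_sdiff.mpr ⟨hγ₂, fun h => hnot (by linarith [(mem_filter.mp h).2])⟩)
    rw [inner_add_left] at this
    linarith
  · have := hmin γ₁ (mem_sdiff.mpr ⟨hγ₁, fun h => h₁ (mem_filter.mp h).2⟩)
    rw [inner_add_left] at this
    linarith

structure IsRootSystem (R : Finset E) : Prop where
  zero_notMem : (0 : E) ∉ R
  rootReflection_mem : ∀ α ∈ R, ∀ β ∈ R, rootReflection α β ∈ R
  eq_one_or_eq_neg_one_of_smul_mem : ∀ α ∈ R, ∀ t : ℝ, t • α ∈ R → t = 1 ∨ t = -1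
  exists_int : ∀ α ∈ R, ∀ β ∈ R, ∃ n : ℤ, 2 * ⟪β, α⟫ / ⟪α, α⟫ = n

namespace IsRootSystem

variable {u v lam : E}

theorem inner_self_pos (hR : IsRootSystem R) {α : E} (hα : α ∈ R) : 0 < ⟪α, α⟫ :=
  real_inner_self_pos.mpr fun h => hR.zero_notMem (h ▸ hα)

theorem neg_mem (hR : IsRootSystem R) {α : E} (hα : α ∈ R) : -α ∈ R := by
  simpa using hR.rootReflection_mem α hα α hα

theorem filter_inner_eq_zero (hR : IsRootSystem R) (m : E) :
    IsRootSystem (R.filter fun α => ⟪α, m⟫ = 0) where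
  zero_notMem h := hR.zero_notMem (mem_filter.mp h).1
  rootReflection_mem α hα β hβ := by
    rw [mem_filter] at hα hβ ⊢
    exact ⟨hR.rootReflection_mem α hα.1 β hβ.1,
      (inner_rootReflection_of_inner_eq_zero hα.2 β).trans hβ.2⟩
  eq_one_or_eq_neg_one_of_smul_mem α hα t ht :=
    hR.eq_one_or_eq_neg_one_of_smul_mem α (mem_filter.mp hα).1 t (mem_filter.mp ht).1
  exists_int α hα β hβ := hR.exists_int α (mem_filter.mp hα).1 β (mem_filter.mp hβ).1

theorem image_rootReflection [DecidableEq E] (hR : IsRootSystem R) {b : E} (hb : b ∈ R) :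
    R.image (rootReflection b) = R := by
  ext x
  refine ⟨fun hx => ?_, fun hx => mem_image.mpr ⟨_, hR.rootReflection_mem b hb x hx, by simp⟩⟩
  obtain ⟨y, hy, rfl⟩ := mem_image.mp hx
  exact hR.rootReflection_mem b hb y hy

theorem posRoots_rootReflection [DecidableEq E] (hR : IsRootSystem R) {b : E} (hb : b ∈ R)
    (u : E) : posRoots R (rootReflection b u) = (posRoots R u).image (rootReflection b) := by
  rw [image_posRoots, hR.image_rootReflection hb]

theorem neg_mem_posRoots (hR : IsRootSystem R) {u α : E} (hu : ∀ α ∈ R, ⟪α, u⟫ ≠ 0)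
    (hα : α ∈ R) (h : α ∉ posRoots R u) : -α ∈ posRoots R u :=
  mem_filter.mpr ⟨hR.neg_mem hα, by
    rw [inner_neg_left, neg_pos]; exact inner_neg_of_notMem_posRoots hu hα h⟩

theorem posRoots_eq_filter_inner_ne_zero (hR : IsRootSystem R) (hu : ∀ α ∈ R, ⟪α, u⟫ ≠ 0)
    {μ : E} (hμ : ∀ α ∈ posRoots R u, 0 ≤ ⟪μ, α⟫) :
    posRoots R μ = (posRoots R u).filter fun α => ⟪α, μ⟫ ≠ 0 := by
  ext α
  simp only [posRoots, mem_filter]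
  constructor
  · rintro ⟨hα, hαμ⟩
    refine ⟨⟨hα, not_le.mp fun hαu => ?_⟩, hαμ.ne'⟩
    have hneg := hμ (-α) (hR.neg_mem_posRoots hu hα fun h => (not_lt.mpr hαu) (mem_filter.mp h).2)
    rw [inner_neg_right, real_inner_comm] at hneg
    linarith
  · rintro ⟨⟨hα, hαu⟩, hαμ⟩
    have := hμ α (mem_filter.mpr ⟨hα, hαu⟩)
    rw [real_inner_comm] at this
    exact ⟨hα, this.lt_of_ne' hαμ⟩

theorem posRoots_eq_of_forall_inner_pos (hR : IsRootSystem R) (hu : ∀ α ∈ R, ⟪α, u⟫ ≠ 0)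
    {u' : E} (hu' : ∀ α ∈ posRoots R u, 0 < ⟪u', α⟫) : posRoots R u' = posRoots R u := by
  rw [posRoots_eq_filter_inner_ne_zero hR hu fun α hα => (hu' α hα).le,
    filter_true_of_mem fun α hα => by rw [real_inner_comm]; exact (hu' α hα).ne']

theorem inner_pos_of_rootReflection_notMem_posRoots (hR : IsRootSystem R)
    (hu : ∀ α ∈ R, ⟪α, u⟫ ≠ 0) {b γ : E} (hb : b ∈ posRoots R u) (hγ : γ ∈ posRoots R u)
    (h : rootReflection b γ ∉ posRoots R u) : 0 < ⟪γ, b⟫ := by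
  obtain ⟨hbR, hbu⟩ := mem_filter.mp hb
  obtain ⟨hγR, hγu⟩ := mem_filter.mp hγ
  have hneg := inner_neg_of_notMem_posRoots hu (hR.rootReflection_mem b hbR γ hγR) h
  rw [rootReflection_apply, inner_sub_left, real_inner_smul_left] at hneg
  have hc : 0 < 2 * ⟪γ, b⟫ / ⟪b, b⟫ := pos_of_mul_pos_left (by linarith) hbu.le
  linarith [(div_pos_iff_of_pos_right (hR.inner_self_pos hbR)).mp hc]

theorem sum_inner_nonneg_of_subset_posRoots (hR : IsRootSystem R) (hu : ∀ α ∈ R, ⟪α, u⟫ ≠ 0)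
    {b : E} (hb : b ∈ posRoots R u) {Q : Finset E} (hQ : Q ⊆ posRoots R u)
    (hQb : ∀ γ ∈ Q, rootReflection b γ ∈ posRoots R u → rootReflection b γ ∈ Q) :
    0 ≤ ∑ γ ∈ Q, ⟪γ, b⟫ := by
  classical
  rw [sum_inner_eq_sum_filter_rootReflection_notMem _ Q b hQ hQb]
  refine sum_nonneg fun γ hγ => ?_
  obtain ⟨hγQ, hγb⟩ := mem_filter.mp hγ
  exact (inner_pos_of_rootReflection_notMem_posRoots hR hu hb (hQ hγQ) hγb).le

theorem inner_halfSum_posRoots_pos (hR : IsRootSystem R) (hu : ∀ α ∈ R, ⟪α, u⟫ ≠ 0) {b : E}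
    (hb : b ∈ posRoots R u) : 0 < ⟪halfSum (posRoots R u), b⟫ := by
  classical
  rw [inner_halfSum_left,
    sum_inner_eq_sum_filter_rootReflection_notMem _ _ b subset_rfl fun _ _ h => h]
  refine mul_pos (by norm_num) (sum_pos (fun γ hγ => ?_) ⟨b, ?_⟩)
  · obtain ⟨hγP, hγb⟩ := mem_filter.mp hγ
    exact inner_pos_of_rootReflection_notMem_posRoots hR hu hb hγP hγb
  · exact mem_filter.mpr ⟨hb, by rw [rootReflection_self]; exact neg_notMem_posRoots hb⟩

theorem inner_halfSum_sub_halfSum_filter_nonneg (hR : IsRootSystem R)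
    (hu : ∀ α ∈ R, ⟪α, u⟫ ≠ 0) (m : E) {α : E}
    (hα : α ∈ (posRoots R u).filter fun α => ⟪α, m⟫ = 0) :
    0 ≤ ⟪halfSum (posRoots R u) - halfSum ((posRoots R u).filter fun α => ⟪α, m⟫ = 0), α⟫ := by
  obtain ⟨hαP, hαm⟩ := mem_filter.mp hα
  rw [← halfSum_filter_add_halfSum_filter_not (posRoots R u) fun α => ⟪α, m⟫ = 0,
    add_sub_cancel_left, inner_halfSum_left]
  refine mul_nonneg (by norm_num) (sum_inner_nonneg_of_subset_posRoots hR hu hαP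
    (filter_subset _ _) fun γ hγ hsγ => mem_filter.mpr ⟨hsγ, ?_⟩)
  rw [inner_rootReflection_of_inner_eq_zero hαm]
  exact (mem_filter.mp hγ).2

theorem norm_sq_halfSum_filter_le_inner (hR : IsRootSystem R) (hu : ∀ α ∈ R, ⟪α, u⟫ ≠ 0)
    (hlam : ∀ α ∈ posRoots R u, 0 ≤ ⟪lam - halfSum (posRoots R u), α⟫) (m : E) :
    ‖halfSum ((posRoots R u).filter fun α => ⟪α, m⟫ = 0)‖ ^ 2 ≤
      ⟪lam, halfSum ((posRoots R u).filter fun α => ⟪α, m⟫ = 0)⟫ := by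
  set S := (posRoots R u).filter fun α => ⟪α, m⟫ = 0
  have hS : ∀ α ∈ S, 0 ≤ ⟪lam - halfSum S, α⟫ := fun α hα => by
    have h := inner_halfSum_sub_halfSum_filter_nonneg hR hu m hα
    rw [← sub_add_sub_cancel lam (halfSum (posRoots R u)), inner_add_left]
    exact add_nonneg (hlam α (mem_filter.mp hα).1) h
  have : 0 ≤ ⟪lam - halfSum S, halfSum S⟫ := by
    rw [inner_halfSum_right]
    exact mul_nonneg (by norm_num) (sum_nonneg hS)
  rwa [inner_sub_left, real_inner_self_eq_norm_sq, sub_nonneg] at this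

theorem norm_sq_halfSum_filter_le_norm_sub_sq (hR : IsRootSystem R)
    (hu : ∀ α ∈ R, ⟪α, u⟫ ≠ 0)
    (hlam : ∀ α ∈ posRoots R u, 0 ≤ ⟪lam - halfSum (posRoots R u), α⟫) (m : E) :
    ‖halfSum ((posRoots R u).filter fun α => ⟪α, m⟫ = 0)‖ ^ 2 ≤ ‖lam - m‖ ^ 2 := by
  set ρm := halfSum ((posRoots R u).filter fun α => ⟪α, m⟫ = 0)
  have hle := norm_sq_halfSum_filter_le_inner hR hu hlam m
  have hsq := norm_sub_sq_real (lam - m) ρm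
  rw [inner_sub_left, inner_halfSum_filter_inner_eq_zero] at hsq
  nlinarith [sq_nonneg ‖lam - m - ρm‖]

theorem eq_add_halfSum_filter_of_norm_sub_sq_eq (hR : IsRootSystem R)
    (hu : ∀ α ∈ R, ⟪α, u⟫ ≠ 0)
    (hlam : ∀ α ∈ posRoots R u, 0 ≤ ⟪lam - halfSum (posRoots R u), α⟫) {μ : E}
    (heq : ‖lam - μ‖ ^ 2 = ⟪lam, halfSum ((posRoots R u).filter fun α => ⟪α, μ⟫ = 0)⟫) :
    lam = μ + halfSum ((posRoots R u).filter fun α => ⟪α, μ⟫ = 0) := by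
  set ρμ := halfSum ((posRoots R u).filter fun α => ⟪α, μ⟫ = 0)
  have hle := norm_sq_halfSum_filter_le_inner hR hu hlam μ
  have hsq : ‖lam - μ - ρμ‖ ^ 2 = ‖ρμ‖ ^ 2 - ⟪lam, ρμ⟫ := by
    rw [norm_sub_sq_real, inner_sub_left, inner_halfSum_filter_inner_eq_zero, heq]
    ring
  have hzero : ‖lam - μ - ρμ‖ ^ 2 = 0 := le_antisymm (by linarith) (sq_nonneg _)
  rw [pow_eq_zero_iff two_ne_zero, norm_eq_zero, sub_sub, sub_eq_zero] at hzero
  exact hzero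

theorem sub_mem_of_inner_pos (hR : IsRootSystem R) {α β : E} (hα : α ∈ R)
    (hβ : β ∈ R) (hne : α ≠ β) (hpos : 0 < ⟪α, β⟫) : α - β ∈ R := by
  obtain ⟨n, hn⟩ := hR.exists_int β hβ α hα
  obtain ⟨m, hm⟩ := hR.exists_int α hα β hβ
  have hαα := hR.inner_self_pos hα
  have hββ := hR.inner_self_pos hβ
  rw [real_inner_comm] at hm
  rw [div_eq_iff hββ.ne'] at hn
  rw [div_eq_iff hαα.ne'] at hm
  have hn0 : (0 : ℝ) < n := pos_of_mul_pos_left (by linarith) hββ.le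
  have hm0 : (0 : ℝ) < m := pos_of_mul_pos_left (by linarith) hαα.le
  norm_cast at hn0 hm0
  have hnm : n * m ≤ 4 := by
    have hCS := real_inner_mul_inner_self_le α β
    have : ((n * m : ℤ) : ℝ) * (⟪α, α⟫ * ⟪β, β⟫) ≤ 4 * (⟪α, α⟫ * ⟪β, β⟫) := by
      push_cast; nlinarith
    exact_mod_cast le_of_mul_le_mul_right this (mul_pos hαα hββ)
  by_cases hn1 : n = 1
  · have := hR.rootReflection_mem β hβ α hα
    rwa [rootReflection_apply, hn, hn1, Int.cast_one, mul_div_cancel_right₀ _ hββ.ne', one_smul]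
      at this
  by_cases hm1 : m = 1
  · have := hR.neg_mem (hR.rootReflection_mem α hα β hβ)
    rwa [rootReflection_apply, real_inner_comm α β, hm, hm1, Int.cast_one,
      mul_div_cancel_right₀ _ hαα.ne', one_smul, neg_sub] at this
  have hn2 : n = 2 := by nlinarith [show 2 ≤ m by omega, show 2 ≤ n by omega]
  have hm2 : m = 2 := by nlinarith [show 2 ≤ m by omega, show 2 ≤ n by omega]
  subst hn2 hm2
  refine absurd (sub_eq_zero.mp ((inner_self_eq_zero (𝕜 := ℝ)).mp ?_)) hne
  rw [inner_sub_left, inner_sub_right, inner_sub_right, real_inner_comm α β]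
  simp only [Int.cast_ofNat] at hn hm
  linarith

theorem rootReflection_mem_posRoots_of_isIndecomposable (hR : IsRootSystem R)
    (hu : ∀ α ∈ R, ⟪α, u⟫ ≠ 0) {δ : E} (hδ : δ ∈ posRoots R u)
    (hind : IsIndecomposable (posRoots R u) δ) {γ : E}
    (hγ : γ ∈ posRoots R u) (hne : γ ≠ δ) : rootReflection δ γ ∈ posRoots R u := by
  classical
  set P := posRoots R u
  by_contra hout
  -- For a counterexample `γ` of least height `⟪γ, u⟫`, the smaller positive root `γ - δ` is no
  -- counterexample, so `δ = s_δ (γ - δ) + (-s_δ γ)` is a sum of two positive roots.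
  obtain ⟨γ, hγB, hmin⟩ := exists_min_image
    (P.filter fun γ => γ ≠ δ ∧ rootReflection δ γ ∉ P) (⟪·, u⟫) ⟨γ, mem_filter.mpr ⟨hγ, hne, hout⟩⟩
  obtain ⟨hγP, hne, hout⟩ := mem_filter.mp hγB
  have hδR := (mem_filter.mp hδ).1
  have hγR := (mem_filter.mp hγP).1
  have hsub : γ - δ ∈ P := by
    by_contra h
    have hsubR := hR.sub_mem_of_inner_pos hγR hδR hne
      (inner_pos_of_rootReflection_notMem_posRoots hR hu hδ hγP hout)
    exact hind γ hγP _ (hR.neg_mem_posRoots hu hsubR h) (by abel)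
  have hsub_ne : γ - δ ≠ δ := fun h => by
    have h2 : (2 : ℝ) • δ = γ := by rw [two_smul]; nth_rw 1 [← h]; exact sub_add_cancel γ δ
    rcases hR.eq_one_or_eq_neg_one_of_smul_mem δ hδR 2 (h2 ▸ hγR) with h | h <;> norm_num at h
  have hsub_lt : ⟪γ - δ, u⟫ < ⟪γ, u⟫ := by
    rw [inner_sub_left]; linarith [(mem_filter.mp hδ).2]
  have hsub_refl : rootReflection δ γ + δ ∈ P := by
    by_contra h
    have := hmin (γ - δ) (mem_filter.mpr ⟨hsub, hsub_ne, by
      rwa [map_sub, rootReflection_self, sub_neg_eq_add]⟩)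
    linarith
  exact hind _ hsub_refl _ (hR.neg_mem_posRoots hu (hR.rootReflection_mem δ hδR γ hγR) hout)
    (by abel)

theorem posRoots_rootReflection_of_isIndecomposable [DecidableEq E] (hR : IsRootSystem R) {u : E}
    (hu : ∀ α ∈ R, ⟪α, u⟫ ≠ 0) {δ : E} (hδ : δ ∈ posRoots R u)
    (hind : IsIndecomposable (posRoots R u) δ) :
    posRoots R (rootReflection δ u) = insert (-δ) ((posRoots R u).erase δ) := by
  rw [hR.posRoots_rootReflection (mem_filter.mp hδ).1]
  ext γ
  simp only [mem_image, mem_insert, mem_erase]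
  constructor
  · rintro ⟨x, hx, rfl⟩
    by_cases hxδ : x = δ
    · exact Or.inl (by rw [hxδ, rootReflection_self])
    refine Or.inr ⟨fun h => neg_notMem_posRoots hδ ?_,
      rootReflection_mem_posRoots_of_isIndecomposable hR hu hδ hind hx hxδ⟩
    have hx' := congrArg (rootReflection δ) h
    rw [rootReflection_rootReflection, rootReflection_self] at hx'
    exact hx' ▸ hx
  · rintro (rfl | ⟨hne, hγ⟩)
    · exact ⟨δ, hδ, rootReflection_self δ⟩
    · exact ⟨rootReflection δ γ,
        rootReflection_mem_posRoots_of_isIndecomposable hR hu hδ hind hγ hne,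
        rootReflection_rootReflection δ γ⟩

theorem norm_sum_posRoots_eq (hR : IsRootSystem R) {u u' : E}
    (hu : ∀ α ∈ R, ⟪α, u⟫ ≠ 0) (hu' : ∀ α ∈ R, ⟪α, u'⟫ ≠ 0) :
    ‖∑ α ∈ posRoots R u, α‖ = ‖∑ α ∈ posRoots R u', α‖ := by
  classical
  -- Induct on `#(P \ P')`: reflecting in a lowest root of `P \ P'`, which is simple in `P`,
  -- removes it from `P \ P'` and preserves the length of the sum.
  obtain ⟨n, hn⟩ : ∃ n, #(posRoots R u \ posRoots R u') = n := ⟨_, rfl⟩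
  induction n generalizing u with
  | zero =>
    rw [card_eq_zero, sdiff_eq_empty_iff_subset] at hn
    rw [posRoots_eq_of_forall_inner_pos hR hu (u' := u') fun α hα => by
      rw [real_inner_comm]; exact (mem_filter.mp (hn hα)).2]
  | succ n ih =>
    obtain ⟨δ, hδ, hmin⟩ :=
      exists_min_image _ (⟪·, u⟫) (card_pos.mp (by omega : 0 < #(posRoots R u \ posRoots R u')))
    obtain ⟨hδP, hδP'⟩ := mem_sdiff.mp hδ
    have hδR := (mem_filter.mp hδP).1
    have hind := isIndecomposable_of_forall_inner_le hδ hmin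
    have hu₁ : ∀ α ∈ R, ⟪α, rootReflection δ u⟫ ≠ 0 := fun α hα => by
      rw [← inner_rootReflection_left]; exact hu _ (hR.rootReflection_mem δ hδR α hα)
    have hcard : #(posRoots R (rootReflection δ u) \ posRoots R u') = n := by
      rw [posRoots_rootReflection_of_isIndecomposable hR hu hδP hind,
        insert_sdiff_of_mem _ (hR.neg_mem_posRoots hu' hδR hδP'), erase_sdiff_comm,
        card_erase_of_mem hδ, hn, Nat.add_sub_cancel]
    calc ‖∑ α ∈ posRoots R u, α‖ = ‖rootReflection δ (∑ α ∈ posRoots R u, α)‖ :=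
          (LinearIsometryEquiv.norm_map _ _).symm
      _ = ‖∑ α ∈ posRoots R (rootReflection δ u), α‖ := by
          rw [hR.posRoots_rootReflection hδR, sum_image (rootReflection δ).injective.injOn,
            map_sum]
      _ = ‖∑ α ∈ posRoots R u', α‖ := ih hu₁ hcard

theorem norm_halfSum_filter_rootReflection (hR : IsRootSystem R)
    (hv : ∀ α ∈ R, ⟪α, v⟫ ≠ 0) {β : E} (hβ : β ∈ R) (μ : E) :
    ‖halfSum ((posRoots R v).filter fun α => ⟪α, rootReflection β μ⟫ = 0)‖ =
      ‖halfSum ((posRoots R v).filter fun α => ⟪α, μ⟫ = 0)‖ := by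
  classical
  have hcomm (m : E) : (posRoots R v).filter (fun α => ⟪α, m⟫ = 0) =
      posRoots (R.filter fun α => ⟪α, m⟫ = 0) v := filter_comm _ _ _
  set R₀ := R.filter fun α => ⟪α, μ⟫ = 0
  have hR₁ : R₀.image (rootReflection β) = R.filter fun α => ⟪α, rootReflection β μ⟫ = 0 := by
    conv_rhs => rw [← hR.image_rootReflection hβ]
    simp only [R₀, filter_image, LinearIsometryEquiv.inner_map_map]
  have hsv : ∀ α ∈ R₀.image (rootReflection β), ⟪α, rootReflection β v⟫ ≠ 0 := fun α hα => by
    obtain ⟨α₀, hα₀, rfl⟩ := mem_image.mp hα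
    rw [LinearIsometryEquiv.inner_map_map]
    exact hv α₀ (mem_filter.mp hα₀).1
  have hv₁ : ∀ α ∈ R₀.image (rootReflection β), ⟪α, v⟫ ≠ 0 := fun α hα => by
    rw [hR₁] at hα
    exact hv α (mem_filter.mp hα).1
  rw [hcomm, hcomm, ← hR₁, halfSum, halfSum, norm_smul, norm_smul]
  congr 1
  calc ‖∑ α ∈ posRoots (R₀.image (rootReflection β)) v, α‖
        = ‖∑ α ∈ posRoots (R₀.image (rootReflection β)) (rootReflection β v), α‖ :=
        (hR₁ ▸ hR.filter_inner_eq_zero (rootReflection β μ)).norm_sum_posRoots_eq hv₁ hsv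
    _ = ‖rootReflection β (∑ α ∈ posRoots R₀ v, α)‖ := by
        rw [← image_posRoots, sum_image (rootReflection β).injective.injOn, map_sum]
    _ = ‖∑ α ∈ posRoots R₀ v, α‖ := LinearIsometryEquiv.norm_map _ _

theorem inner_pos_of_inner_sub_halfSum_nonneg (hR : IsRootSystem R) (hv : ∀ α ∈ R, ⟪α, v⟫ ≠ 0)
    (hlam : ∀ α ∈ posRoots R v, 0 ≤ ⟪lam - halfSum (posRoots R v), α⟫) {β : E}
    (hβ : β ∈ posRoots R v) : 0 < ⟪lam, β⟫ := by
  have := hlam β hβ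
  rw [inner_sub_left] at this
  linarith [inner_halfSum_posRoots_pos hR hv hβ]

theorem inner_nonneg_of_norm_sub_sq_eq (hR : IsRootSystem R) (hv : ∀ α ∈ R, ⟪α, v⟫ ≠ 0)
    (hlam : ∀ α ∈ posRoots R v, 0 ≤ ⟪lam - halfSum (posRoots R v), α⟫) {μ : E}
    (heq : ‖lam - μ‖ ^ 2 = ‖halfSum ((posRoots R v).filter fun α => ⟪α, μ⟫ = 0)‖ ^ 2) {β : E}
    (hβ : β ∈ posRoots R v) : 0 ≤ ⟪μ, β⟫ := by
  have hβR := (mem_filter.mp hβ).1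
  have hle := norm_sq_halfSum_filter_le_norm_sub_sq hR hv hlam (rootReflection β μ)
  rw [hR.norm_halfSum_filter_rootReflection hv hβR μ, ← heq, norm_sub_rootReflection_sq] at hle
  have hc : 0 ≤ 2 * (2 * ⟪μ, β⟫ / ⟪β, β⟫) :=
    (mul_nonneg_iff_of_pos_right (inner_pos_of_inner_sub_halfSum_nonneg hR hv hlam hβ)).mp
      (by linarith)
  have hββ := hR.inner_self_pos hβR
  have := mul_nonneg hc hββ.le
  rw [mul_assoc, div_mul_cancel₀ _ hββ.ne'] at this
  linarith

end IsRootSystem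

end

theorem magical_equality_first_general
    {E : Type*} [NormedAddCommGroup E] [InnerProductSpace ℝ E]
    (Δ : Finset E)
    (hΔ0 : (0 : E) ∉ Δ)
    (hΔred : ∀ α ∈ Δ, ∀ t : ℝ, t • α ∈ Δ → t = 1 ∨ t = -1)
    (hΔrefl : ∀ α ∈ Δ, ∀ β ∈ Δ, β - (2 * ⟪β, α⟫ / ⟪α, α⟫) • α ∈ Δ)
    (hΔcrys : ∀ α ∈ Δ, ∀ β ∈ Δ, ∃ n : ℤ, 2 * ⟪β, α⟫ / ⟪α, α⟫ = (n : ℝ))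
    (v : E) (hv : ∀ α ∈ Δ, ⟪α, v⟫ ≠ 0)
    (Δpos : Finset E) (hΔpos : Δpos = Δ.filter (fun α => 0 < ⟪α, v⟫))
    (ρ : E) (hρ : ρ = (2 : ℝ)⁻¹ • ∑ α ∈ Δpos, α)    (lam μ : E)
    (hlam : ∀ α ∈ Δpos, 0 ≤ ⟪lam - ρ, α⟫)
    (ρμ : E) (hρμ : ρμ = (2 : ℝ)⁻¹ • ∑ α ∈ Δpos.filter (fun α => ⟪α, μ⟫ = 0), α)
    (ρlam : E) (hρlam : ρlam = (2 : ℝ)⁻¹ • ∑ α ∈ Δ.filter (fun α => 0 < ⟪α, lam⟫), α)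
    (ρμD : E) (hρμD : ρμD = (2 : ℝ)⁻¹ • ∑ α ∈ Δ.filter (fun α => 0 < ⟪α, μ⟫), α)
    (heq : ‖lam - μ‖ ^ 2 = (2 : ℝ)⁻¹ * ∑ α ∈ Δpos.filter (fun α => ⟪α, μ⟫ = 0), ⟪lam, α⟫) :
    (∀ α ∈ Δpos, 0 ≤ ⟪μ, α⟫) ∧ lam = μ + ρμ ∧ lam - ρlam = μ - ρμD ∧
      (2 : ℝ)⁻¹ * ∑ α ∈ Δpos.filter (fun α => ⟪α, μ⟫ = 0), ⟪lam, α⟫ = ‖ρμ‖ ^ 2 := by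
  change Δpos = posRoots Δ v at hΔpos
  change ρ = halfSum Δpos at hρ
  change ρμ = halfSum (Δpos.filter fun α => ⟪α, μ⟫ = 0) at hρμ
  change ρlam = halfSum (posRoots Δ lam) at hρlam
  change ρμD = halfSum (posRoots Δ μ) at hρμD
  subst hΔpos hρ hρlam hρμD
  have hR : IsRootSystem Δ :=
    ⟨hΔ0, fun α hα β hβ => (rootReflection_apply α β).symm ▸ hΔrefl α hα β hβ, hΔred, hΔcrys⟩
  have hlamμ : lam = μ + ρμ := by
    rw [hρμ]
    exact hR.eq_add_halfSum_filter_of_norm_sub_sq_eq hv hlam (by rw [heq, inner_halfSum_right])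
  have hnorm : ‖lam - μ‖ ^ 2 = ‖ρμ‖ ^ 2 := by rw [hlamμ, add_sub_cancel_left]
  have hμ : ∀ β ∈ posRoots Δ v, 0 ≤ ⟪μ, β⟫ := fun β hβ =>
    hR.inner_nonneg_of_norm_sub_sq_eq hv hlam (hρμ ▸ hnorm) hβ
  refine ⟨hμ, hlamμ, ?_, heq ▸ hnorm⟩
  rw [hR.posRoots_eq_of_forall_inner_pos hv fun β hβ =>
      hR.inner_pos_of_inner_sub_halfSum_nonneg hv hlam hβ,
    hR.posRoots_eq_filter_inner_ne_zero hv hμ,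
    ← halfSum_filter_add_halfSum_filter_not (posRoots Δ v) fun α => ⟪α, μ⟫ = 0, ← hρμ]
  nth_rw 1 [hlamμ]
  abel

theorem magical_equality_first
    {E : Type*} [NormedAddCommGroup E] [InnerProductSpace ℝ E] [FiniteDimensional ℝ E]
    (Δ : Finset E)
    (hΔ0 : (0 : E) ∉ Δ)
    (hΔred : ∀ α ∈ Δ, ∀ t : ℝ, t • α ∈ Δ → t = 1 ∨ t = -1)
    (hΔrefl : ∀ α ∈ Δ, ∀ β ∈ Δ, β - (2 * ⟪β, α⟫ / ⟪α, α⟫) • α ∈ Δ)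
    (hΔcrys : ∀ α ∈ Δ, ∀ β ∈ Δ, ∃ n : ℤ, 2 * ⟪β, α⟫ / ⟪α, α⟫ = (n : ℝ))
    (v : E) (hv : ∀ α ∈ Δ, ⟪α, v⟫ ≠ 0)
    (Δpos : Finset E) (hΔpos : Δpos = Δ.filter (fun α => 0 < ⟪α, v⟫))
    (ρ : E) (hρ : ρ = (2 : ℝ)⁻¹ • ∑ α ∈ Δpos, α)    (lam μ : E)
    (hlam : ∀ α ∈ Δpos, 0 ≤ ⟪lam - ρ, α⟫)
    (ρμ : E) (hρμ : ρμ = (2 : ℝ)⁻¹ • ∑ α ∈ Δpos.filter (fun α => ⟪α, μ⟫ = 0), α)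
    (ρlam : E) (hρlam : ρlam = (2 : ℝ)⁻¹ • ∑ α ∈ Δ.filter (fun α => 0 < ⟪α, lam⟫), α)
    (ρμD : E) (hρμD : ρμD = (2 : ℝ)⁻¹ • ∑ α ∈ Δ.filter (fun α => 0 < ⟪α, μ⟫), α)
    (heq : ‖lam - μ‖ ^ 2 = (2 : ℝ)⁻¹ * ∑ α ∈ Δpos.filter (fun α => ⟪α, μ⟫ = 0), ⟪lam, α⟫) :
    (∀ α ∈ Δpos, 0 ≤ ⟪μ, α⟫) ∧ lam = μ + ρμ ∧ lam - ρlam = μ - ρμD ∧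
      (2 : ℝ)⁻¹ * ∑ α ∈ Δpos.filter (fun α => ⟪α, μ⟫ = 0), ⟪lam, α⟫ = ‖ρμ‖ ^ 2 :=
  magical_equality_first_general Δ hΔ0 hΔred hΔrefl hΔcrys v hv Δpos hΔpos ρ hρ lam μ hlam ρμ hρμ
    ρlam hρlam ρμD hρμD heq
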